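/- For every s with 0 ≤ s ≤ n-1 and all j, m with 1 ≤ j, m ≤ p-1, the j-th convolution power of z_{p^s} satisfies z_{p^s}^j(t^{m p^s}) = m!·δ_{j,m} (equal to m! in K if j = m, and 0 otherwise). -/

import Mathlib

open Polynomial TensorProduct

noncomputable section

/-- The truncated polynomial algebra `K[t]/(t^{p^n})`, underlying the Hopf algebra
`H_{n,r,f}`. -/
abbrev TruncAlg (K : Type) [Field K] (p n : ℕ) : Type :=
  AdjoinRoot (X ^ p ^ n : K[X])

/-- `t`, the image of `X` in `K[t]/(t^{p^n})`. -/
def tgen (K : Type) [Field K] (p n : ℕ) : TruncAlg K p n :=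
  AdjoinRoot.root _

/-- The basis `1, t, t^2, …, t^{p^n-1}` of `K[t]/(t^{p^n})`. -/
def tbasis (K : Type) [Field K] (p n : ℕ) :
    Module.Basis (Fin (p ^ n)) K (TruncAlg K p n) :=
  (AdjoinRoot.powerBasis (f := (X ^ p ^ n : K[X]))
    (pow_ne_zero _ Polynomial.X_ne_zero)).basis.reindex
    (finCongr (by simp))

/-- The dual basis functional `z_j ∈ H = H_{n,r,f}^*`, with `z_j (t^i) = δ_{ij}`;
junk value `0` out of range. -/
def zdual (K : Type) [Field K] (p n : ℕ) (j : ℕ) :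
    Module.Dual K (TruncAlg K p n) :=
  if h : j < p ^ n then (tbasis K p n).coord ⟨j, h⟩ else 0

/-- The coefficient `1/(ℓ!(p-ℓ)!)`, computed in the prime field of `K`. -/
def pfCoeff (K : Type) [Field K] (p ℓ : ℕ) : K :=
  ((ℓ.factorial * (p - ℓ).factorial : ℕ) : K)⁻¹

/-- The element `Δ(t) = t⊗1 + 1⊗t + f Σ_{ℓ=1}^{p-1} (1/(ℓ!(p-ℓ)!)) t^{p^r ℓ} ⊗ t^{p^r (p-ℓ)}`. -/
def Delta_t (K : Type) [Field K] (p n r : ℕ) (f : K) :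
    TruncAlg K p n ⊗[K] TruncAlg K p n :=
  tgen K p n ⊗ₜ 1 + 1 ⊗ₜ tgen K p n +
    f • ∑ ℓ ∈ Finset.Icc 1 (p - 1),
      pfCoeff K p ℓ • ((tgen K p n ^ (p ^ r * ℓ)) ⊗ₜ[K] (tgen K p n ^ (p ^ r * (p - ℓ))))

/-- The comultiplication of `H_{n,r,f}` as a linear map, determined by `Δ(t^i) = Δ(t)^i`
(it is the unique `K`-algebra map with `t ↦ Δ(t)`). -/
def DeltaMap (K : Type) [Field K] (p n r : ℕ) (f : K) :
    TruncAlg K p n →ₗ[K] TruncAlg K p n ⊗[K] TruncAlg K p n :=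
  (tbasis K p n).constr K fun i => (Delta_t K p n r f) ^ (i : ℕ)

/-- Convolution product on `H = (H_{n,r,f})^*`:  `(z * z')(h) = mult ((z ⊗ z')(Δ h))`. -/
def conv (K : Type) [Field K] (p n r : ℕ) (f : K)
    (z z' : Module.Dual K (TruncAlg K p n)) : Module.Dual K (TruncAlg K p n) :=
  (LinearMap.mul' K K) ∘ₗ (TensorProduct.map z z') ∘ₗ DeltaMap K p n r f

/-- Convolution powers; the 0th power is the unit `z_0 = ε` of `H`. -/
def convPow (K : Type) [Field K] (p n r : ℕ) (f : K)
    (z : Module.Dual K (TruncAlg K p n)) : ℕ → Module.Dual K (TruncAlg K p n)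
  | 0 => zdual K p n 0
  | m + 1 => conv K p n r f (convPow K p n r f z m) z

/-- The convolution product `z_1^{j 0} · z_p^{j 1} ⋯ z_{p^{m-1}}^{j (m-1)}` in `H`. -/
def zprod (K : Type) [Field K] (p n r : ℕ) (f : K)
    (j : ℕ → ℕ) : ℕ → Module.Dual K (TruncAlg K p n)
  | 0 => zdual K p n 0
  | m + 1 => conv K p n r f (zprod K p n r f j m)
      (convPow K p n r f (zdual K p n (p ^ m)) (j m))

/-! Write `q = p^s`. In characteristic `p`, Frobenius gives
`Δ(t)^q = t^q ⊗ 1 + 1 ⊗ t^q + (1 ⊗ t^{p^r q}) D` for some `D`, since every summand of the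
`f`-part of `Δ(t)` has right factor divisible by `t^{p^r}`. As `r > 0`, `z_q` kills the ideal
generated by `t^{p^r q}`, so `(g · z_q)(t^{mq}) = (g ⊗ z_q)((1 ⊗ t^q + t^q ⊗ 1)^m) = m g(t^{(m-1)q})`
by the binomial theorem. Induction on `j` then gives `z_q^j(t^{mq}) = m! δ_{jm}`. -/

section TensorProduct

variable {R A : Type*} [CommRing R] [CommRing A] [Algebra R A]

lemma charP_tensorProduct_self (h : Function.Injective (algebraMap R A)) (p : ℕ) [CharP R p] :
    CharP (A ⊗[R] A) p := by
  have hcomp : Algebra.TensorProduct.lmul' (S := A) R ∘ algebraMap R (A ⊗[R] A) =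
      algebraMap R A := funext (AlgHom.commutes _)
  exact charP_of_injective_algebraMap (hcomp ▸ h).of_comp p

lemma mul'_map_eq_zero_of_one_tmul_dvd (g z : Module.Dual R A) {e : A}
    (he : ∀ w, z (e * w) = 0) {X : A ⊗[R] A} (hX : 1 ⊗ₜ e ∣ X) :
    LinearMap.mul' R R (map g z X) = 0 := by
  obtain ⟨Y, rfl⟩ := hX
  induction Y using TensorProduct.induction_on with
  | zero => simp
  | tmul u v => simp [Algebra.TensorProduct.tmul_mul_tmul, he]
  | add Y Y' hY hY' => rw [mul_add, map_add, map_add, hY, hY', add_zero]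

lemma mul'_map_one_tmul_add_tmul_one_pow (g z : Module.Dual R A) {x : A}
    (hz : ∀ i, z (x ^ i) = if i = 1 then 1 else 0) (m : ℕ) :
    LinearMap.mul' R R (map g z ((1 ⊗ₜ x + x ⊗ₜ 1) ^ m)) = m * g (x ^ (m - 1)) := by
  have hterm : ∀ i, LinearMap.mul' R R (map g z ((1 ⊗ₜ x) ^ i * (x ⊗ₜ 1) ^ (m - i) *
      (m.choose i : A ⊗[R] A))) = if i = 1 then m.choose i * g (x ^ (m - i)) else 0 := by
    intro i
    simp only [Algebra.TensorProduct.tmul_pow, one_pow, Algebra.TensorProduct.tmul_mul_tmul,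
      one_mul, mul_one, ← nsmul_eq_mul', map_nsmul, map_tmul, LinearMap.mul'_apply, hz]
    split_ifs <;> simp [nsmul_eq_mul]
  simp only [add_pow, map_sum, hterm, Finset.sum_ite_eq', Finset.mem_range]
  split_ifs with hm <;> simp_all [Nat.choose_one_right]

end TensorProduct

section TruncAlg

variable {K : Type} [Field K] {p n : ℕ}

lemma tbasis_apply (i : Fin (p ^ n)) : tbasis K p n i = tgen K p n ^ (i : ℕ) := by
  simp [tbasis, tgen]

lemma tgen_pow_eq_zero {a : ℕ} (ha : p ^ n ≤ a) : tgen K p n ^ a = 0 := by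
  obtain ⟨b, rfl⟩ := Nat.exists_eq_add_of_le ha
  rw [pow_add, tgen, ← AdjoinRoot.mk_X, ← map_pow, AdjoinRoot.mk_self, zero_mul]

lemma zdual_tgen_pow {j : ℕ} (hj : j < p ^ n) (a : ℕ) :
    zdual K p n j (tgen K p n ^ a) = if a = j then 1 else 0 := by
  by_cases ha : a < p ^ n
  · rw [zdual, dif_pos hj, ← tbasis_apply ⟨a, ha⟩, Module.Basis.coord_apply,
      Module.Basis.repr_self, Finsupp.single_apply]
    simp [Fin.ext_iff]
  · rw [tgen_pow_eq_zero (not_lt.mp ha), map_zero, if_neg (by omega)]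

lemma zdual_tgen_pow_mul_eq_zero {j a : ℕ} (hja : j < a) (w : TruncAlg K p n) :
    zdual K p n j (tgen K p n ^ a * w) = 0 := by
  by_cases hj : j < p ^ n
  · suffices (zdual K p n j) ∘ₗ LinearMap.mulLeft K (tgen K p n ^ a) = 0 from
      LinearMap.congr_fun this w
    refine (tbasis K p n).ext fun i ↦ ?_
    simp [tbasis_apply, ← pow_add, zdual_tgen_pow hj, show a + i ≠ j by omega]
  · simp [zdual, hj]

lemma DeltaMap_tgen_pow (r : ℕ) (f : K) {a : ℕ} (ha : a < p ^ n) :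
    DeltaMap K p n r f (tgen K p n ^ a) = Delta_t K p n r f ^ a := by
  rw [← tbasis_apply ⟨a, ha⟩, DeltaMap, Module.Basis.constr_basis]

instance [Fact p.Prime] : Nontrivial (TruncAlg K p n) :=
  AdjoinRoot.nontrivial _ (by simp [(Fact.out : p.Prime).ne_zero])

end TruncAlg

section Convolution

variable {K : Type} [Field K] {p n r : ℕ} (f : K)

lemma one_tmul_tgen_pow_dvd_Delta_t_sub :
    (1 ⊗ₜ[K] (tgen K p n ^ p ^ r)) ∣
      Delta_t K p n r f - (1 ⊗ₜ tgen K p n + tgen K p n ⊗ₜ 1) := by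
  rw [Delta_t, add_comm (tgen K p n ⊗ₜ 1), add_sub_cancel_left, Algebra.smul_def]
  refine Dvd.dvd.mul_left (Finset.dvd_sum fun ℓ hℓ ↦ ?_) _
  have hsplit : (tgen K p n ^ (p ^ r * ℓ)) ⊗ₜ[K] (tgen K p n ^ (p ^ r * (p - ℓ))) =
      ((tgen K p n ^ (p ^ r * ℓ)) ⊗ₜ[K] (tgen K p n ^ (p ^ r * (p - ℓ - 1)))) *
        (1 ⊗ₜ[K] (tgen K p n ^ p ^ r)) := by
    rw [Algebra.TensorProduct.tmul_mul_tmul, mul_one, ← pow_add, ← mul_add_one]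
    grind
  rw [Algebra.smul_def, hsplit]
  exact Dvd.dvd.mul_left (dvd_mul_left _ _) _

lemma one_tmul_tgen_pow_dvd_Delta_t_pow_sub [Fact p.Prime] [CharP K p] (s m : ℕ) :
    (1 ⊗ₜ[K] (tgen K p n ^ (p ^ r * p ^ s))) ∣
      Delta_t K p n r f ^ (m * p ^ s) -
        (1 ⊗ₜ[K] (tgen K p n ^ p ^ s) + (tgen K p n ^ p ^ s) ⊗ₜ[K] 1) ^ m := by
  have := charP_tensorProduct_self (algebraMap K (TruncAlg K p n)).injective p
  set Y := Delta_t K p n r f - (1 ⊗ₜ tgen K p n + tgen K p n ⊗ₜ 1)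
  have hfrob : Delta_t K p n r f ^ p ^ s =
      (1 ⊗ₜ[K] (tgen K p n ^ p ^ s) + (tgen K p n ^ p ^ s) ⊗ₜ[K] 1) + Y ^ p ^ s := by
    rw [← add_sub_cancel (1 ⊗ₜ tgen K p n + tgen K p n ⊗ₜ 1) (Delta_t K p n r f),
      add_pow_char_pow, add_pow_char_pow, Algebra.TensorProduct.tmul_pow,
      Algebra.TensorProduct.tmul_pow, one_pow]
  have hY : (1 ⊗ₜ[K] (tgen K p n ^ (p ^ r * p ^ s))) ∣ Y ^ p ^ s := by
    rw [pow_mul, ← one_pow (p ^ s), ← Algebra.TensorProduct.tmul_pow]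
    exact pow_dvd_pow_of_dvd (one_tmul_tgen_pow_dvd_Delta_t_sub f) _
  rw [mul_comm m, pow_mul (Delta_t K p n r f)]
  refine hY.trans (dvd_trans ?_ (sub_dvd_pow_sub_pow _ _ m))
  rw [hfrob, add_sub_cancel_left]

lemma conv_zdual_apply_tgen_pow [Fact p.Prime] [CharP K p] (hr : 0 < r) {s m : ℕ}
    (hs : s < n) (hm : m * p ^ s < p ^ n) (g : Module.Dual K (TruncAlg K p n)) :
    conv K p n r f g (zdual K p n (p ^ s)) (tgen K p n ^ (m * p ^ s)) =
      m * g (tgen K p n ^ ((m - 1) * p ^ s)) := by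
  have hp := (Fact.out : p.Prime).one_lt
  have hq0 : p ^ s ≠ 0 := (pow_pos (zero_lt_one.trans hp) s).ne'
  have hq : p ^ s < p ^ n := Nat.pow_lt_pow_right hp hs
  have hqr : p ^ s < p ^ r * p ^ s :=
    lt_mul_left (by positivity) (Nat.one_lt_pow hr.ne' hp)
  set X := 1 ⊗ₜ[K] (tgen K p n ^ p ^ s) + (tgen K p n ^ p ^ s) ⊗ₜ[K] 1
  have hz : ∀ i, zdual K p n (p ^ s) ((tgen K p n ^ p ^ s) ^ i) = if i = 1 then 1 else 0 := by
    intro i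
    simp [← pow_mul, zdual_tgen_pow hq, mul_eq_left₀ hq0]
  have hvanish := mul'_map_eq_zero_of_one_tmul_dvd g (zdual K p n (p ^ s))
    (zdual_tgen_pow_mul_eq_zero hqr) (one_tmul_tgen_pow_dvd_Delta_t_pow_sub f s m)
  rw [conv, LinearMap.comp_apply, LinearMap.comp_apply, DeltaMap_tgen_pow r f hm,
    ← add_sub_cancel (X ^ m) (Delta_t K p n r f ^ (m * p ^ s)), map_add, map_add, hvanish,
    add_zero, mul'_map_one_tmul_add_tmul_one_pow g _ hz, ← pow_mul, mul_comm (p ^ s)]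

lemma convPow_zdual_apply_tgen_pow [Fact p.Prime] [CharP K p] (hr : 0 < r) {s : ℕ}
    (hs : s < n) (j : ℕ) {m : ℕ} (hm : m * p ^ s < p ^ n) :
    convPow K p n r f (zdual K p n (p ^ s)) j (tgen K p n ^ (m * p ^ s)) =
      if j = m then (m.factorial : K) else 0 := by
  induction j generalizing m with
  | zero =>
    rw [convPow, zdual_tgen_pow (pow_pos (Fact.out : p.Prime).pos n)]
    rcases Nat.eq_zero_or_pos m with rfl | hm0
    · simp
    · simp [hm0.ne', (Fact.out : p.Prime).ne_zero, eq_comm (a := 0)]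
  | succ j ih =>
    rw [convPow, conv_zdual_apply_tgen_pow f hr hs hm,
      ih (lt_of_le_of_lt (Nat.mul_le_mul_right _ (Nat.sub_le m 1)) hm)]
    rcases Nat.eq_zero_or_pos m with rfl | hm0
    · simp
    · by_cases hj : j = m - 1
      · rw [if_pos hj, if_pos (by omega), ← Nat.cast_mul, Nat.mul_factorial_pred hm0.ne']
      · rw [if_neg hj, if_neg (by omega), mul_zero]

end Convolution

theorem convPow_zdual_apply_tpow_general
    (p : ℕ) [Fact p.Prime] (F : Type) [Field F] [CharP F p]
    (n r : ℕ) (hr : 0 < r)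
    (f : LaurentSeries F) :
    ∀ s : ℕ, s < n → ∀ j m : ℕ, 1 ≤ j → j ≤ p - 1 → 1 ≤ m → m ≤ p - 1 →
      convPow (LaurentSeries F) p n r f (zdual (LaurentSeries F) p n (p ^ s)) j
          (tgen (LaurentSeries F) p n ^ (m * p ^ s))
        = if j = m then (m.factorial : LaurentSeries F) else 0 := by
  have : CharP (LaurentSeries F) p :=
    charP_of_injective_algebraMap (algebraMap F (LaurentSeries F)).injective p
  intro s hs j m _ _ _ hm
  have hp := (Fact.out : p.Prime)
  refine convPow_zdual_apply_tgen_pow f hr hs j ?_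
  calc m * p ^ s < p * p ^ s := Nat.mul_lt_mul_of_pos_right (by omega) (pow_pos hp.pos s)
    _ = p ^ (s + 1) := (pow_succ' p s).symm
    _ ≤ p ^ n := Nat.pow_le_pow_right hp.pos hs

/-- In `H = H_{n,r,f}^*`, for `0 ≤ s ≤ n-1` and `1 ≤ j, m ≤ p-1`,
the convolution power `z_{p^s}^j` satisfies `z_{p^s}^j(t^{m p^s}) = m!·δ_{j,m}`. -/
theorem convPow_zdual_apply_tpow
    (p : ℕ) [Fact p.Prime] (F : Type) [Field F] [Fintype F] [CharP F p]
    (n r : ℕ) (hr : 0 < r) (hrn : r < n) (hn2r : n ≤ 2 * r)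
    (f : LaurentSeries F) (hf : f ≠ 0) :
    ∀ s : ℕ, s < n → ∀ j m : ℕ, 1 ≤ j → j ≤ p - 1 → 1 ≤ m → m ≤ p - 1 →
      convPow (LaurentSeries F) p n r f (zdual (LaurentSeries F) p n (p ^ s)) j
          (tgen (LaurentSeries F) p n ^ (m * p ^ s))
        = if j = m then (m.factorial : LaurentSeries F) else 0 :=
  convPow_zdual_apply_tpow_general p F n r hr f

end
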